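/- Let H(x) = tanh(x/√2), Y₁(x) = 2^(-3/4)·√3·tanh(x/√2)·sech(x/√2), and f(x) = (3/2)·( H(x)·Y₁(x)² - (∫_ℝ H(y)·Y₁(y)³ dy)·Y₁(x) ). Then f is odd, ∫_ℝ f(x)·Y₁(x) dx = 0, there is a constant C > 0 with |f(x)| + |f'(x)| ≤ C·e^(-|x|/√2) for all x, and there exists a unique odd, twice differentiable function q : ℝ → ℝ with q and q' square integrable satisfying -q''(x) + 2·q(x) - 3·sech²(x/√2)·q(x) = f(x) for all x; moreover this q satisfies |q(x)| + |q'(x)| ≤ C'·e^(-|x|/√2) for all x, for some constant C' > 0. -/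

import Mathlib

/-!
With `H = tanh (x/√2)` and `S = sech (x/√2)` one has `H' = S²/√2`, `S' = -HS/√2` and
`H² + S² = 1`, so `Y₁` and `f` are polynomials in `H` and `S`. Oddness of `f` is immediate, and
`∫ f Y₁ = 0` reduces to `∫ Y₁² = 1`, as `Y₁² = c² H² S²` is a multiple of `(H³)'`.
An explicit odd solution `q` of `L q = f` is checked by differentiation; `f`, `q` and their
derivatives are `O(S)` uniformly on `ℝ`, and `S ≤ 2 e^{-|x|/√2}`.
If `w` is the difference of two admissible solutions, then `w'' = (2 - 3S²) w`. Its Wronskian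
with the zero mode `S²` of `L` is constant and square integrable, hence zero; as `w` is odd this
forces `w 0 = w' 0 = 0`, and uniqueness for linear ODEs gives `w = 0`.
-/

open MeasureTheory

noncomputable def sech (x : ℝ) : ℝ := 1 / Real.cosh x

noncomputable def Hkink (x : ℝ) : ℝ := Real.tanh (x / Real.sqrt 2)

noncomputable def Y1 (x : ℝ) : ℝ :=
  (2 : ℝ) ^ (-(3 : ℝ) / 4) * Real.sqrt 3 * Real.tanh (x / Real.sqrt 2) * sech (x / Real.sqrt 2)

noncomputable def fsrc (x : ℝ) : ℝ :=
  (3 / 2) * (Hkink x * (Y1 x) ^ 2 - (∫ y : ℝ, Hkink y * (Y1 y) ^ 3) * Y1 x)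

/-- The admissibility conditions on the solution `q` of `L q = fsrc`:
odd, twice differentiable, with `q` and `q'` square integrable, solving the ODE. -/
def Psol (q : ℝ → ℝ) : Prop :=
  (∀ x, q (-x) = -q x) ∧
  Differentiable ℝ q ∧ Differentiable ℝ (deriv q) ∧
  Integrable (fun x => (q x) ^ 2) ∧
  Integrable (fun x => (deriv q x) ^ 2) ∧
  (∀ x : ℝ, -(deriv (deriv q)) x + 2 * q x - 3 * sech (x / Real.sqrt 2) ^ 2 * q x = fsrc x)

open Real Filter Topology Asymptotics Set
open scoped ENNReal

section SecondOrderLinearODE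

variable {V w w' z z' : ℝ → ℝ}

theorem eq_zero_of_hasDerivAt_of_eq_zero {B x₀ : ℝ} (hV : ∀ x, |V x| ≤ B)
    (hw : ∀ x, HasDerivAt w (w' x) x) (hw' : ∀ x, HasDerivAt w' (V x * w x) x)
    (h₀ : w x₀ = 0) (h₀' : w' x₀ = 0) : w = 0 := by
  have hlip (t : ℝ) :
      LipschitzOnWith (max 1 B.toNNReal) (fun p : ℝ × ℝ => (p.2, V t * p.1)) univ := by
    refine ((LipschitzWith.prod_snd.prodMk
      ((lipschitzWith_smul (V t)).comp LipschitzWith.prod_fst)).weaken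
      (max_le_max le_rfl ?_)).lipschitzOnWith
    rw [mul_one, ← NNReal.coe_le_coe, coe_nnnorm, Real.norm_eq_abs]
    exact (hV t).trans (le_coe_toNNReal B)
  have hsol := ODE_solution_unique_univ (f := fun x => (w x, w' x)) (g := fun _ => 0) (t₀ := x₀)
    hlip (fun t => ⟨(hw t).prodMk (hw' t), mem_univ _⟩)
    (fun t => ⟨(hasDerivAt_const t (0 : ℝ × ℝ)).congr_deriv (by simp [Prod.zero_eq_mk]),
      mem_univ _⟩)
    (by simp [h₀, h₀'])
  funext x
  exact congrArg Prod.fst (congrFun hsol x)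

theorem hasDerivAt_wronskian (hw : ∀ x, HasDerivAt w (w' x) x)
    (hw' : ∀ x, HasDerivAt w' (V x * w x) x) (hz : ∀ x, HasDerivAt z (z' x) x)
    (hz' : ∀ x, HasDerivAt z' (V x * z x) x) (x : ℝ) :
    HasDerivAt (fun x => w' x * z x - w x * z' x) 0 x :=
  (((hw' x).mul (hz x)).sub ((hw x).mul (hz' x))).congr_deriv (by ring)

theorem wronskian_eq_zero_of_memLp {p : ℝ≥0∞} {C : ℝ} (hp₀ : p ≠ 0) (hp : p ≠ ∞)
    (hw : ∀ x, HasDerivAt w (w' x) x) (hw' : ∀ x, HasDerivAt w' (V x * w x) x)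
    (hz : ∀ x, HasDerivAt z (z' x) x) (hz' : ∀ x, HasDerivAt z' (V x * z x) x)
    (hwL : MemLp w p) (hw'L : MemLp w' p)
    (hzC : ∀ x, |z x| ≤ C) (hz'C : ∀ x, |z' x| ≤ C) (x : ℝ) :
    w' x * z x - w x * z' x = 0 := by
  set W := fun x => w' x * z x - w x * z' x
  have hW := hasDerivAt_wronskian hw hw' hz hz'
  have hconst (y : ℝ) : W y = W x :=
    is_const_of_deriv_eq_zero (fun y => (hW y).differentiableAt) (fun y => (hW y).deriv) y x
  have hWL : MemLp W p := by
    refine ((hw'L.norm.add hwL.norm).const_mul C).of_le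
      (continuous_iff_continuousAt.2 fun y => (hW y).continuousAt).aestronglyMeasurable
      (Eventually.of_forall fun y => ?_)
    simp only [W, Real.norm_eq_abs, Pi.add_apply]
    calc |w' y * z y - w y * z' y| ≤ |w' y| * |z y| + |w y| * |z' y| := by
          rw [← abs_mul, ← abs_mul]; exact abs_sub _ _
      _ ≤ |w' y| * C + |w y| * C := by gcongr; exacts [hzC y, hz'C y]
      _ = C * (|w' y| + |w y|) := by ring
      _ ≤ _ := le_abs_self _
  have hconstL : MemLp (fun _ : ℝ => W x) p := hWL.congr_norm (by fun_prop) (by simp [hconst])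
  rcases (memLp_const_iff hp₀ hp).1 hconstL with h | h
  · exact h
  · simp at h

theorem eq_zero_of_odd_of_memLp {p : ℝ≥0∞} {B C : ℝ} (hp₀ : p ≠ 0) (hp : p ≠ ∞)
    (hV : ∀ x, |V x| ≤ B)
    (hw : ∀ x, HasDerivAt w (w' x) x) (hw' : ∀ x, HasDerivAt w' (V x * w x) x)
    (hz : ∀ x, HasDerivAt z (z' x) x) (hz' : ∀ x, HasDerivAt z' (V x * z x) x)
    (hodd : Function.Odd w) (hwL : MemLp w p) (hw'L : MemLp w' p)
    (hzC : ∀ x, |z x| ≤ C) (hz'C : ∀ x, |z' x| ≤ C) (hz₀ : z 0 ≠ 0) : w = 0 := by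
  have h₀ : w 0 = 0 := hodd.map_zero
  have h₀' : w' 0 = 0 := by
    have := wronskian_eq_zero_of_memLp hp₀ hp hw hw' hz hz' hwL hw'L hzC hz'C 0
    rw [h₀, zero_mul, sub_zero] at this
    exact (mul_eq_zero.1 this).resolve_right hz₀
  exact eq_zero_of_hasDerivAt_of_eq_zero hV hw hw' h₀ h₀'

end SecondOrderLinearODE

theorem sech_pos (y : ℝ) : 0 < sech y := one_div_pos.2 (cosh_pos y)

theorem sech_le_one (y : ℝ) : sech y ≤ 1 := div_le_one_of_le₀ (one_le_cosh y) (cosh_pos y).le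

theorem sech_neg (y : ℝ) : sech (-y) = sech y := by rw [sech, sech, cosh_neg]

theorem tanh_sq_add_sech_sq (y : ℝ) : tanh y ^ 2 + sech y ^ 2 = 1 := by
  rw [tanh_eq_sinh_div_cosh, sech]
  field_simp [(cosh_pos y).ne']
  linarith [cosh_sq y]

theorem Real.hasDerivAt_tanh (y : ℝ) : HasDerivAt tanh (sech y ^ 2) y := by
  have h := (hasDerivAt_sinh y).div (hasDerivAt_cosh y) (cosh_pos y).ne'
  refine (h.congr_deriv ?_).congr_of_eventuallyEq
    (Eventually.of_forall fun y => tanh_eq_sinh_div_cosh y)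
  rw [sech]
  field_simp [(cosh_pos y).ne']
  linarith [cosh_sq y]

theorem hasDerivAt_sech (y : ℝ) : HasDerivAt sech (-(tanh y * sech y)) y := by
  have h := (hasDerivAt_cosh y).inv (cosh_pos y).ne'
  refine (h.congr_deriv ?_).congr_of_eventuallyEq (Eventually.of_forall fun y => one_div _)
  rw [sech, tanh_eq_sinh_div_cosh]
  field_simp

theorem sech_le_two_mul_exp_neg_abs (y : ℝ) : sech y ≤ 2 * exp (-|y|) := by
  rw [sech, ← cosh_abs, exp_neg, div_le_iff₀ (cosh_pos _), cosh_eq]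
  field_simp
  linarith [exp_pos (-|y|)]

theorem abs_mul_sech_le_one (y : ℝ) : |y| * sech y ≤ 1 := by
  rw [sech, mul_one_div, div_le_one (cosh_pos y), ← cosh_abs]
  exact (self_le_sinh_iff.2 (abs_nonneg y)).trans (sinh_lt_cosh _).le

theorem sech_sq_le_inv_one_add_sq (y : ℝ) : sech y ^ 2 ≤ (1 + y ^ 2)⁻¹ := by
  have hy : y ^ 2 ≤ sinh y ^ 2 := by
    rw [← sq_abs y, ← sq_abs (sinh y), abs_sinh]
    exact pow_le_pow_left₀ (abs_nonneg y) (self_le_sinh_iff.2 (abs_nonneg y)) 2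
  rw [sech, div_pow, one_pow, one_div, cosh_sq]
  exact inv_anti₀ (by positivity) (by linarith)

theorem Real.tanh_eq_one_sub (y : ℝ) : tanh y = 1 - 2 / (exp (2 * y) + 1) := by
  rw [tanh_eq, exp_neg, show 2 * y = (2 : ℕ) * y by norm_num, exp_nat_mul]
  field_simp
  ring

theorem Real.tendsto_tanh_atTop : Tendsto tanh atTop (𝓝 1) := by
  have h : Tendsto (fun y => exp (2 * y) + 1) atTop atTop :=
    tendsto_atTop_add_const_right _ _
      (tendsto_exp_atTop.comp (tendsto_id.const_mul_atTop two_pos))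
  have h' := (h.inv_tendsto_atTop.const_mul 2).const_sub 1
  rw [mul_zero, sub_zero] at h'
  exact h'.congr fun y => by rw [tanh_eq_one_sub, div_eq_mul_inv, Pi.inv_apply]

theorem Real.tendsto_tanh_atBot : Tendsto tanh atBot (𝓝 (-1)) := by
  simpa [Function.comp_def] using (tendsto_tanh_atTop.comp tendsto_neg_atBot_atTop).neg

theorem inv_sqrt_two_sq : (√2)⁻¹ ^ 2 = (2⁻¹ : ℝ) := by rw [inv_pow, sq_sqrt zero_le_two]

noncomputable def Skink (x : ℝ) : ℝ := sech (x / √2)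

theorem hasDerivAt_Hkink (x : ℝ) : HasDerivAt Hkink ((√2)⁻¹ * Skink x ^ 2) x := by
  have := (hasDerivAt_tanh (x / √2)).comp x ((hasDerivAt_id x).div_const √2)
  exact this.congr_deriv (by rw [Skink]; ring)

theorem hasDerivAt_Skink (x : ℝ) :
    HasDerivAt Skink (-((√2)⁻¹ * (Hkink x * Skink x))) x := by
  have := (hasDerivAt_sech (x / √2)).comp x ((hasDerivAt_id x).div_const √2)
  exact this.congr_deriv (by rw [Skink, Hkink]; ring)

theorem continuous_Hkink : Continuous Hkink :=
  continuous_iff_continuousAt.2 fun x => (hasDerivAt_Hkink x).continuousAt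

theorem continuous_Skink : Continuous Skink :=
  continuous_iff_continuousAt.2 fun x => (hasDerivAt_Skink x).continuousAt

theorem Hkink_sq_add_Skink_sq (x : ℝ) : Hkink x ^ 2 + Skink x ^ 2 = 1 :=
  tanh_sq_add_sech_sq _

theorem Hkink_neg (x : ℝ) : Hkink (-x) = -Hkink x := by rw [Hkink, Hkink, neg_div, tanh_neg]

theorem Skink_neg (x : ℝ) : Skink (-x) = Skink x := by rw [Skink, Skink, neg_div, sech_neg]

theorem abs_Hkink_le_one (x : ℝ) : |Hkink x| ≤ 1 := (abs_tanh_lt_one _).le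

theorem Skink_pos (x : ℝ) : 0 < Skink x := sech_pos _

theorem Skink_le_one (x : ℝ) : Skink x ≤ 1 := sech_le_one _

theorem tendsto_Hkink_atTop : Tendsto Hkink atTop (𝓝 1) :=
  tendsto_tanh_atTop.comp (tendsto_id.atTop_div_const (sqrt_pos.2 two_pos))

theorem tendsto_Hkink_atBot : Tendsto Hkink atBot (𝓝 (-1)) :=
  tendsto_tanh_atBot.comp (tendsto_id.atBot_div_const (sqrt_pos.2 two_pos))

noncomputable def kinkMonomial (a b : ℕ) (x : ℝ) : ℝ := Hkink x ^ a * Skink x ^ b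

noncomputable def kinkMonomialDeriv (a b : ℕ) (x : ℝ) : ℝ :=
  (√2)⁻¹ * (a * kinkMonomial (a - 1) (b + 2) x - b * kinkMonomial (a + 1) b x)

theorem hasDerivAt_kinkMonomial (a b : ℕ) (x : ℝ) :
    HasDerivAt (kinkMonomial a b) (kinkMonomialDeriv a b x) x := by
  refine (((hasDerivAt_Hkink x).pow a).mul ((hasDerivAt_Skink x).pow b)).congr_deriv ?_
  rcases a with _ | a <;> rcases b with _ | b <;>
    simp only [kinkMonomialDeriv, kinkMonomial, Pi.pow_apply, pow_succ, pow_zero] <;>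
    push_cast <;> ring

theorem continuous_kinkMonomial (a b : ℕ) : Continuous (kinkMonomial a b) :=
  (continuous_Hkink.pow a).mul (continuous_Skink.pow b)

theorem isBigO_kinkMonomial (a : ℕ) {b k : ℕ} (hk : k ≤ b) :
    kinkMonomial a b =O[⊤] fun x => Skink x ^ k := by
  refine isBigO_top.2 ⟨1, fun x => ?_⟩
  have hS := Skink_pos x
  simp only [kinkMonomial, norm_mul, norm_pow, Real.norm_eq_abs, abs_of_pos hS]
  exact mul_le_mul (pow_le_one₀ (abs_nonneg _) (abs_Hkink_le_one x))
    (pow_le_pow_of_le_one hS.le (Skink_le_one x) hk) (by positivity) zero_le_one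

theorem isBigO_kinkMonomial_Skink (a : ℕ) {b : ℕ} (hb : b ≠ 0) :
    kinkMonomial a b =O[⊤] Skink := by
  simpa using isBigO_kinkMonomial a (k := 1) (Nat.one_le_iff_ne_zero.2 hb)

theorem isBigO_kinkMonomialDeriv (a : ℕ) {b : ℕ} (hb : b ≠ 0) :
    kinkMonomialDeriv a b =O[⊤] Skink :=
  (((isBigO_kinkMonomial_Skink _ (Nat.succ_ne_zero _)).const_mul_left _).sub
    ((isBigO_kinkMonomial_Skink _ hb).const_mul_left _)).const_mul_left _

theorem isBigO_id_mul_kinkMonomial (a : ℕ) {b : ℕ} (hb : 2 ≤ b) :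
    (fun x => x * kinkMonomial a b x) =O[⊤] Skink := by
  refine isBigO_top.2 ⟨√2, fun x => ?_⟩
  have hS := Skink_pos x
  have hx : |x| * Skink x ≤ √2 := by
    have := abs_mul_sech_le_one (x / √2)
    rwa [abs_div, abs_of_pos (sqrt_pos.2 two_pos), div_mul_eq_mul_div,
      div_le_one (sqrt_pos.2 two_pos), ← Skink] at this
  obtain ⟨b, rfl⟩ := Nat.exists_eq_add_of_le' hb
  have hHS : |Hkink x| ^ a * Skink x ^ b ≤ 1 :=
    mul_le_one₀ (pow_le_one₀ (abs_nonneg _) (abs_Hkink_le_one x)) (by positivity)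
      (pow_le_one₀ hS.le (Skink_le_one x))
  simp only [kinkMonomial, norm_mul, norm_pow, Real.norm_eq_abs, abs_of_pos hS]
  calc |x| * (|Hkink x| ^ a * Skink x ^ (b + 2))
      = (|x| * Skink x) * (|Hkink x| ^ a * Skink x ^ b) * Skink x := by ring
    _ ≤ √2 * 1 * Skink x := by gcongr
    _ = √2 * Skink x := by ring

theorem isBigO_Skink_exp : Skink =O[⊤] fun x => exp (-|x| / √2) := by
  refine isBigO_top.2 ⟨2, fun x => ?_⟩
  rw [Real.norm_of_nonneg (Skink_pos x).le, Real.norm_of_nonneg (exp_pos _).le]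
  have := sech_le_two_mul_exp_neg_abs (x / √2)
  rwa [abs_div, abs_of_pos (sqrt_pos.2 two_pos), ← neg_div] at this

theorem isBigO_Skink_sq : (fun x => Skink x ^ 2) =O[⊤] fun x => (1 + x ^ 2)⁻¹ := by
  refine isBigO_top.2 ⟨2, fun x => ?_⟩
  rw [Real.norm_of_nonneg (by positivity), Real.norm_of_nonneg (by positivity)]
  calc Skink x ^ 2 ≤ (1 + (x / √2) ^ 2)⁻¹ := sech_sq_le_inv_one_add_sq _
    _ ≤ 2 * (1 + x ^ 2)⁻¹ := by
      rw [div_pow, sq_sqrt zero_le_two, ← div_eq_mul_inv, le_div_iff₀ (by positivity),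
        ← div_eq_inv_mul, div_le_iff₀ (by positivity)]
      nlinarith [sq_nonneg x]

theorem integrable_of_isBigO_Skink_sq {g : ℝ → ℝ} (hg : Continuous g)
    (h : g =O[⊤] fun x => Skink x ^ 2) : Integrable g :=
  (h.trans isBigO_Skink_sq).integrable hg.aestronglyMeasurable integrable_inv_one_add_sq

theorem integrable_sq_of_isBigO_Skink {g : ℝ → ℝ} (hg : Continuous g) (h : g =O[⊤] Skink) :
    Integrable fun x => g x ^ 2 :=
  integrable_of_isBigO_Skink_sq (hg.pow 2) (h.pow 2)

theorem exists_abs_add_abs_le_exp {g g' : ℝ → ℝ} (h : g =O[⊤] Skink)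
    (h' : g' =O[⊤] Skink) :
    ∃ C > 0, ∀ x, |g x| + |g' x| ≤ C * exp (-|x| / √2) := by
  obtain ⟨C, hC, hbound⟩ := ((h.norm_left.add h'.norm_left).trans isBigO_Skink_exp).exists_pos
  refine ⟨C, hC, fun x => ?_⟩
  have := isBigOWith_top.1 hbound x
  rwa [Real.norm_of_nonneg (by positivity), Real.norm_of_nonneg (exp_pos _).le] at this

noncomputable def Y1coeff : ℝ := (2 : ℝ) ^ (-(3 : ℝ) / 4) * √3

theorem Y1coeff_sq : Y1coeff ^ 2 = 3 / 2 * (√2)⁻¹ := by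
  have h : ((2 : ℝ) ^ (-(3 : ℝ) / 4)) ^ 2 = 2⁻¹ * (√2)⁻¹ := by
    rw [← rpow_natCast, ← rpow_mul zero_le_two, sqrt_eq_rpow, ← rpow_neg zero_le_two,
      ← rpow_neg_one, ← rpow_add two_pos]
    norm_num
  rw [Y1coeff, mul_pow, h, sq_sqrt (by norm_num)]
  ring

noncomputable def kinkMoment : ℝ := ∫ y : ℝ, Hkink y * Y1 y ^ 3

theorem Y1_eq (x : ℝ) : Y1 x = Y1coeff * kinkMonomial 1 1 x := by
  rw [Y1, kinkMonomial, Hkink, Skink, Y1coeff]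
  ring

theorem continuous_Y1 : Continuous Y1 :=
  ((continuous_kinkMonomial 1 1).const_mul Y1coeff).congr fun x => (Y1_eq x).symm

theorem fsrc_eq (x : ℝ) : fsrc x =
    3 / 2 * Y1coeff ^ 2 * kinkMonomial 3 2 x
      - 3 / 2 * kinkMoment * Y1coeff * kinkMonomial 1 1 x := by
  change 3 / 2 * (Hkink x * Y1 x ^ 2 - kinkMoment * Y1 x) = _
  simp only [Y1_eq, kinkMonomial]
  ring

theorem fsrc_neg (x : ℝ) : fsrc (-x) = -fsrc x := by
  rw [fsrc_eq, fsrc_eq]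
  simp only [kinkMonomial, Hkink_neg, Skink_neg]
  ring

theorem Y1_sq (x : ℝ) : Y1 x ^ 2 = Y1coeff ^ 2 * kinkMonomial 2 2 x := by
  simp only [Y1_eq, kinkMonomial]
  ring

theorem Hkink_mul_Y1_pow_three (x : ℝ) :
    Hkink x * Y1 x ^ 3 = Y1coeff ^ 3 * kinkMonomial 4 3 x := by
  simp only [Y1_eq, kinkMonomial]
  ring

theorem integrable_Y1_sq : Integrable fun x => Y1 x ^ 2 :=
  integrable_of_isBigO_Skink_sq (continuous_Y1.pow 2)
    (((isBigO_kinkMonomial 2 le_rfl).const_mul_left _).congr_left fun x => (Y1_sq x).symm)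

theorem integrable_Hkink_mul_Y1_pow_three : Integrable fun x => Hkink x * Y1 x ^ 3 :=
  integrable_of_isBigO_Skink_sq (continuous_Hkink.mul (continuous_Y1.pow 3))
    (((isBigO_kinkMonomial 4 (by norm_num)).const_mul_left _).congr_left
      fun x => (Hkink_mul_Y1_pow_three x).symm)

theorem integral_Y1_sq : ∫ x, Y1 x ^ 2 = 1 := by
  set c := Y1coeff ^ 2 * √2 / 3
  have hsqrt : √2 * (√2)⁻¹ = 1 := mul_inv_cancel₀ (by positivity)
  have hderiv (x : ℝ) : HasDerivAt (fun x => c * Hkink x ^ 3) (Y1 x ^ 2) x := by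
    refine (((hasDerivAt_Hkink x).pow 3).const_mul c).congr_deriv ?_
    rw [Y1_sq, kinkMonomial]
    linear_combination (Y1coeff ^ 2 * Hkink x ^ 2 * Skink x ^ 2) * hsqrt
  rw [integral_of_hasDerivAt_of_tendsto hderiv integrable_Y1_sq
    ((tendsto_Hkink_atBot.pow 3).const_mul c) ((tendsto_Hkink_atTop.pow 3).const_mul c)]
  linear_combination (2 * √2 / 3) * Y1coeff_sq + hsqrt

theorem integral_fsrc_mul_Y1 : ∫ x, fsrc x * Y1 x = 0 := by
  have h (x : ℝ) :
      fsrc x * Y1 x = 3 / 2 * (Hkink x * Y1 x ^ 3) - 3 / 2 * kinkMoment * Y1 x ^ 2 := by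
    change 3 / 2 * (Hkink x * Y1 x ^ 2 - kinkMoment * Y1 x) * Y1 x = _
    ring
  simp only [h]
  rw [integral_sub (integrable_Hkink_mul_Y1_pow_three.const_mul _) (integrable_Y1_sq.const_mul _),
    integral_const_mul, integral_const_mul, integral_Y1_sq, kinkMoment]
  ring

theorem isBigO_fsrc : fsrc =O[⊤] Skink :=
  (((isBigO_kinkMonomial_Skink 3 two_ne_zero).const_mul_left _).sub
    ((isBigO_kinkMonomial_Skink 1 one_ne_zero).const_mul_left _)).congr_left
      fun x => (fsrc_eq x).symm

theorem hasDerivAt_fsrc (x : ℝ) : HasDerivAt fsrc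
    (3 / 2 * Y1coeff ^ 2 * kinkMonomialDeriv 3 2 x
      - 3 / 2 * kinkMoment * Y1coeff * kinkMonomialDeriv 1 1 x) x := by
  rw [show fsrc = _ from funext fsrc_eq]
  exact ((hasDerivAt_kinkMonomial 3 2 x).const_mul _).sub
    ((hasDerivAt_kinkMonomial 1 1 x).const_mul _)

theorem isBigO_deriv_fsrc : deriv fsrc =O[⊤] Skink :=
  (((isBigO_kinkMonomialDeriv 3 two_ne_zero).const_mul_left _).sub
    ((isBigO_kinkMonomialDeriv 1 one_ne_zero).const_mul_left _)).congr_left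
      fun x => (hasDerivAt_fsrc x).deriv.symm

noncomputable def kinkPotential (x : ℝ) : ℝ := 2 - 3 * Skink x ^ 2

theorem abs_kinkPotential_le (x : ℝ) : |kinkPotential x| ≤ 2 := by
  have h0 := Skink_pos x
  have h1 := Skink_le_one x
  rw [kinkPotential, abs_le]
  constructor <;> nlinarith

noncomputable def zeroMode (x : ℝ) : ℝ := Skink x ^ 2

noncomputable def zeroModeDeriv (x : ℝ) : ℝ := -(2 * (√2)⁻¹ * Hkink x * Skink x ^ 2)

theorem hasDerivAt_zeroMode (x : ℝ) : HasDerivAt zeroMode (zeroModeDeriv x) x :=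
  ((hasDerivAt_Skink x).pow 2).congr_deriv (by rw [zeroModeDeriv]; ring)

theorem hasDerivAt_zeroModeDeriv (x : ℝ) :
    HasDerivAt zeroModeDeriv (kinkPotential x * zeroMode x) x := by
  refine ((((hasDerivAt_Hkink x).const_mul (2 * (√2)⁻¹)).mul
    ((hasDerivAt_Skink x).pow 2)).neg).congr_deriv ?_
  rw [kinkPotential, zeroMode, Pi.pow_apply]
  linear_combination (-2 * (Skink x ^ 4 - 2 * Hkink x ^ 2 * Skink x ^ 2)) * inv_sqrt_two_sq
    + 2 * Skink x ^ 2 * Hkink_sq_add_Skink_sq x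

theorem abs_zeroMode_le (x : ℝ) : |zeroMode x| ≤ 1 := by
  rw [zeroMode, abs_of_pos (pow_pos (Skink_pos x) 2)]
  nlinarith [Skink_pos x, Skink_le_one x]

theorem abs_zeroModeDeriv_le (x : ℝ) : |zeroModeDeriv x| ≤ 2 := by
  have hκ : (√2)⁻¹ ≤ 1 := inv_le_one_of_one_le₀ (one_le_sqrt.2 one_le_two)
  have hS : Skink x ^ 2 ≤ 1 := pow_le_one₀ (Skink_pos x).le (Skink_le_one x)
  simp only [zeroModeDeriv, abs_neg, abs_mul, abs_two, abs_inv, abs_pow,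
    abs_of_pos (sqrt_pos.2 two_pos), abs_of_pos (Skink_pos x)]
  calc 2 * (√2)⁻¹ * |Hkink x| * Skink x ^ 2 ≤ 2 * 1 * 1 * 1 := by
        gcongr
        exact abs_Hkink_le_one x
    _ = 2 := by norm_num

/-- As `S²` spans `ker L`, `L (x S²) = -2 (S²)' = 2√2 H S²`; moreover
`L (H S²) = 3 H S² - 3 H³ S²` and `L (H S) = 3/2 H S`. The coefficients of `qsol` are read off
from these three identities. -/
noncomputable def qsol (x : ℝ) : ℝ :=
  9 / 16 * x * Skink x ^ 2 - 3 / 4 * (√2)⁻¹ * Hkink x * Skink x ^ 2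
    - kinkMoment * Y1coeff * Hkink x * Skink x

noncomputable def qsolDeriv (x : ℝ) : ℝ :=
  9 / 16 * Skink x ^ 2 - 9 / 8 * (√2)⁻¹ * x * Hkink x * Skink x ^ 2
    - 3 / 8 * (Skink x ^ 4 - 2 * Hkink x ^ 2 * Skink x ^ 2)
    - kinkMoment * Y1coeff * (√2)⁻¹ * (Skink x ^ 3 - Hkink x ^ 2 * Skink x)

theorem hasDerivAt_qsol (x : ℝ) : HasDerivAt qsol (qsolDeriv x) x := by
  have hH := hasDerivAt_Hkink x
  have hS := hasDerivAt_Skink x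
  have h₁ := ((hasDerivAt_id x).const_mul (9 / 16)).mul (hS.pow 2)
  have h₂ := (hH.const_mul (3 / 4 * (√2)⁻¹)).mul (hS.pow 2)
  have h₃ := (hH.const_mul (kinkMoment * Y1coeff)).mul hS
  refine ((h₁.sub h₂).sub h₃).congr_deriv ?_
  simp only [qsolDeriv, Pi.pow_apply, id]
  linear_combination (-3 / 4 * Skink x ^ 4 + 3 / 2 * Hkink x ^ 2 * Skink x ^ 2) * inv_sqrt_two_sq

theorem hasDerivAt_qsolDeriv (x : ℝ) :
    HasDerivAt qsolDeriv (kinkPotential x * qsol x - fsrc x) x := by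
  have hH := hasDerivAt_Hkink x
  have hS := hasDerivAt_Skink x
  have h₁ := (hS.pow 2).const_mul (9 / 16)
  have h₂ := ((((hasDerivAt_id x).const_mul (9 / 8 * (√2)⁻¹)).mul hH).mul (hS.pow 2))
  have h₃ := ((hS.pow 4).sub (((hH.pow 2).const_mul 2).mul (hS.pow 2))).const_mul (3 / 8)
  have h₄ := ((hS.pow 3).sub ((hH.pow 2).mul hS)).const_mul (kinkMoment * Y1coeff * (√2)⁻¹)
  refine (((h₁.sub h₂).sub h₃).sub h₄).congr_deriv ?_
  rw [kinkPotential, qsol, fsrc_eq]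
  simp only [kinkMonomial, Pi.pow_apply, Pi.mul_apply, id]
  linear_combination
    (5 * Hkink x * Skink x ^ 3 * Y1coeff * kinkMoment - Hkink x ^ 3 * Skink x * Y1coeff * kinkMoment
      - 9 / 8 * x * Skink x ^ 4 + 9 / 4 * x * Hkink x ^ 2 * Skink x ^ 2) * inv_sqrt_two_sq
    + (-1 / 2 * Hkink x * Skink x * Y1coeff * kinkMoment
      + 3 / 2 * Hkink x * Skink x ^ 2 * Y1coeff ^ 2 - 3 / 2 * Hkink x * Skink x ^ 2 * (√2)⁻¹
      + 9 / 8 * x * Skink x ^ 2) * Hkink_sq_add_Skink_sq x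
    + (3 / 2 * Hkink x * Skink x ^ 2 - 3 / 2 * Hkink x * Skink x ^ 4) * Y1coeff_sq

theorem qsol_neg (x : ℝ) : qsol (-x) = -qsol x := by
  simp only [qsol, Hkink_neg, Skink_neg]
  ring

theorem continuous_qsol : Continuous qsol :=
  continuous_iff_continuousAt.2 fun x => (hasDerivAt_qsol x).continuousAt

theorem continuous_qsolDeriv : Continuous qsolDeriv :=
  continuous_iff_continuousAt.2 fun x => (hasDerivAt_qsolDeriv x).continuousAt

theorem deriv_qsol : deriv qsol = qsolDeriv := funext fun x => (hasDerivAt_qsol x).deriv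

theorem isBigO_qsol : qsol =O[⊤] Skink :=
  ((((isBigO_id_mul_kinkMonomial 0 le_rfl).const_mul_left (9 / 16)).sub
    ((isBigO_kinkMonomial_Skink 1 two_ne_zero).const_mul_left (3 / 4 * (√2)⁻¹))).sub
    ((isBigO_kinkMonomial_Skink 1 one_ne_zero).const_mul_left (kinkMoment * Y1coeff))).congr_left
      fun x => by simp only [qsol, kinkMonomial]; ring

theorem isBigO_qsolDeriv : qsolDeriv =O[⊤] Skink :=
  (((((isBigO_kinkMonomial_Skink 0 two_ne_zero).const_mul_left (9 / 16)).sub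
    ((isBigO_id_mul_kinkMonomial 1 le_rfl).const_mul_left (9 / 8 * (√2)⁻¹))).sub
    (((isBigO_kinkMonomial_Skink 0 four_ne_zero).sub
      ((isBigO_kinkMonomial_Skink 2 two_ne_zero).const_mul_left 2)).const_mul_left (3 / 8))).sub
    (((isBigO_kinkMonomial_Skink 0 three_ne_zero).sub
      (isBigO_kinkMonomial_Skink 2 one_ne_zero)).const_mul_left
        (kinkMoment * Y1coeff * (√2)⁻¹))).congr_left
      fun x => by simp only [qsolDeriv, kinkMonomial]; ring

theorem integrable_qsol_sq : Integrable fun x => qsol x ^ 2 :=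
  integrable_sq_of_isBigO_Skink continuous_qsol isBigO_qsol

theorem integrable_qsolDeriv_sq : Integrable fun x => qsolDeriv x ^ 2 :=
  integrable_sq_of_isBigO_Skink continuous_qsolDeriv isBigO_qsolDeriv

theorem psol_qsol : Psol qsol := by
  refine ⟨qsol_neg, fun x => (hasDerivAt_qsol x).differentiableAt, ?_, integrable_qsol_sq,
    deriv_qsol ▸ integrable_qsolDeriv_sq, fun x => ?_⟩
  · rw [deriv_qsol]
    exact fun x => (hasDerivAt_qsolDeriv x).differentiableAt
  · rw [deriv_qsol, (hasDerivAt_qsolDeriv x).deriv, kinkPotential, Skink]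
    ring

theorem Psol.eq_qsol {q : ℝ → ℝ} (hq : Psol q) : q = qsol := by
  obtain ⟨hodd, hq', hq'', hint, hint', hode⟩ := hq
  have hw (x : ℝ) : HasDerivAt (fun x => q x - qsol x) (deriv q x - qsolDeriv x) x :=
    (hq' x).hasDerivAt.sub (hasDerivAt_qsol x)
  have hw' (x : ℝ) : HasDerivAt (fun x => deriv q x - qsolDeriv x)
      (kinkPotential x * (q x - qsol x)) x := by
    refine ((hq'' x).hasDerivAt.sub (hasDerivAt_qsolDeriv x)).congr_deriv ?_
    rw [kinkPotential, Skink]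
    linear_combination (-1 : ℝ) * hode x
  have hw_odd : Function.Odd fun x => q x - qsol x := fun x => by
    simp only [hodd x, qsol_neg x]
    ring
  have hmemLp {f : ℝ → ℝ} (hf : Continuous f) (hf2 : Integrable fun x => f x ^ 2) :
      MemLp f 2 :=
    (memLp_two_iff_integrable_sq hf.aestronglyMeasurable).2 hf2
  have hwL := (hmemLp hq'.continuous hint).sub (hmemLp continuous_qsol integrable_qsol_sq)
  have hw'L :=
    (hmemLp hq''.continuous hint').sub (hmemLp continuous_qsolDeriv integrable_qsolDeriv_sq)
  have hzeroMode : zeroMode 0 ≠ 0 := by simp [zeroMode, Skink, sech]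
  have hw0 := eq_zero_of_odd_of_memLp two_ne_zero ENNReal.ofNat_ne_top abs_kinkPotential_le
    hw hw' hasDerivAt_zeroMode hasDerivAt_zeroModeDeriv hw_odd hwL hw'L
    (fun x => (abs_zeroMode_le x).trans one_le_two) abs_zeroModeDeriv_le hzeroMode
  funext x
  exact sub_eq_zero.1 (congrFun hw0 x)

theorem properties_of_f_and_q :
    (∀ x : ℝ, fsrc (-x) = -fsrc x) ∧
    (∫ x : ℝ, fsrc x * Y1 x) = 0 ∧
    (∃ C > 0, ∀ x : ℝ,
      |fsrc x| + |deriv fsrc x| ≤ C * Real.exp (-|x| / Real.sqrt 2)) ∧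
    (∃! q : ℝ → ℝ, Psol q) ∧
    (∀ q : ℝ → ℝ, Psol q →
      ∃ C' > 0, ∀ x : ℝ, |q x| + |deriv q x| ≤ C' * Real.exp (-|x| / Real.sqrt 2)) := by
  refine ⟨fsrc_neg, integral_fsrc_mul_Y1, exists_abs_add_abs_le_exp isBigO_fsrc isBigO_deriv_fsrc,
    ⟨qsol, psol_qsol, fun q hq => hq.eq_qsol⟩, fun q hq => ?_⟩
  rw [hq.eq_qsol, deriv_qsol]
  exact exists_abs_add_abs_le_exp isBigO_qsol isBigO_qsolDeriv
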